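/- arXiv:1711.04854 — 5 statements merged into one kernel-verified Lean document; each statement's English description precedes it below -/
import Mathlib

section
/- Let (Ω, P) be a probability space, let x, y : ℕ → Ω → ℝ be sequences of measurable functions such that x_j, y_k and x_j·y_k are integrable for all j, k, and let ρ : ℕ → ℝ with ρ_j > 0 for all j. Assume that ∫_Ω ∑_{j,k} ρ_j⁻¹ ρ_k⁻¹ x_j² y_k² dP < ∞, ∫_Ω ∑_j ρ_j⁻¹ x_j² dP < ∞ and ∫_Ω ∑_k ρ_k⁻¹ y_k² dP < ∞. Then ∑_{j,k} ρ_j⁻¹ ρ_k⁻¹ (E[x_j y_k] − E[x_j] E[y_k])² < ∞. -/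
open MeasureTheory ENNReal
open scoped NNReal

/-!
Jensen's inequality `(∫ f)² ≤ ∫ f²` on a probability space, applied to each coefficient and
summed by monotone convergence, bounds the weighted squared means of `x_j y_k`, `x_j` and `y_k`
by the three assumed integrals. Since `(a - b c)² ≤ 2 a² + 2 b² c²`, the weighted squared
covariances are then dominated by the first of these sums plus the product of the other two.
-/

theorem sq_enorm_integral_le_lintegral_sq_enorm {α E : Type*} [MeasurableSpace α]
    [NormedAddCommGroup E] [NormedSpace ℝ E] {μ : Measure α} [IsProbabilityMeasure μ]
    {f : α → E} (hf : AEStronglyMeasurable f μ) :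
    ‖∫ a, f a ∂μ‖ₑ ^ 2 ≤ ∫⁻ a, ‖f a‖ₑ ^ 2 ∂μ := by
  calc ‖∫ a, f a ∂μ‖ₑ ^ 2 ≤ eLpNorm f 1 μ ^ 2 := by
        rw [eLpNorm_one_eq_lintegral_enorm]
        gcongr
        exact enorm_integral_le_lintegral_enorm f
    _ ≤ eLpNorm f (2 : ℝ≥0) μ ^ 2 := by
        gcongr
        exact eLpNorm_le_eLpNorm_of_exponent_le (by norm_num : (1 : ℝ≥0∞) ≤ (2 : ℝ≥0)) hf
    _ = ∫⁻ a, ‖f a‖ₑ ^ 2 ∂μ := by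
        simpa using eLpNorm_nnreal_pow_eq_lintegral (f := f) (μ := μ) two_ne_zero

theorem ENNReal.ofReal_mul_sq {w : ℝ} (hw : 0 ≤ w) (r : ℝ) :
    ENNReal.ofReal (w * r ^ 2) = ENNReal.ofReal w * ‖r‖ₑ ^ 2 := by
  rw [ENNReal.ofReal_mul hw, Real.enorm_eq_ofReal_abs, ← ENNReal.ofReal_pow (abs_nonneg r),
    sq_abs]

theorem tsum_ofReal_mul_sq_integral_le_lintegral_tsum {α ι : Type*} [MeasurableSpace α]
    [Countable ι] {μ : Measure α} [IsProbabilityMeasure μ] {f : ι → α → ℝ}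
    (hf : ∀ i, AEMeasurable (f i) μ) {w : ι → ℝ} (hw : ∀ i, 0 ≤ w i) :
    ∑' i, ENNReal.ofReal (w i * (∫ a, f i a ∂μ) ^ 2) ≤
      ∫⁻ a, ∑' i, ENNReal.ofReal (w i * f i a ^ 2) ∂μ := by
  rw [lintegral_tsum fun i => ((hf i).pow_const 2).const_mul (w i) |>.ennreal_ofReal]
  refine ENNReal.tsum_le_tsum fun i => ?_
  simp only [ENNReal.ofReal_mul_sq (hw i)]
  rw [lintegral_const_mul' _ _ ofReal_ne_top]
  gcongr
  exact sq_enorm_integral_le_lintegral_sq_enorm (hf i).aestronglyMeasurable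

theorem ofReal_mul_mul_sq_sub_mul_le {u v : ℝ} (hu : 0 ≤ u) (hv : 0 ≤ v) (a b c : ℝ) :
    ENNReal.ofReal (u * v * (a - b * c) ^ 2) ≤
      2 * ENNReal.ofReal (u * v * a ^ 2) +
        2 * (ENNReal.ofReal (u * b ^ 2) * ENNReal.ofReal (v * c ^ 2)) := by
  have hsq : (a - b * c) ^ 2 ≤ 2 * a ^ 2 + 2 * (b * c) ^ 2 := by
    nlinarith [sq_nonneg (a + b * c)]
  rw [← ENNReal.ofReal_mul (by positivity), ← ENNReal.ofReal_ofNat 2,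
    ← ENNReal.ofReal_mul zero_le_two, ← ENNReal.ofReal_mul zero_le_two,
    ← ENNReal.ofReal_add (by positivity) (by positivity)]
  refine ENNReal.ofReal_le_ofReal ?_
  calc u * v * (a - b * c) ^ 2 ≤ u * v * (2 * a ^ 2 + 2 * (b * c) ^ 2) := by gcongr
    _ = _ := by ring

theorem crossCovariance_mem_tensor_RKHS_general
    {Ω : Type*} [MeasurableSpace Ω] (P : Measure Ω) [IsProbabilityMeasure P]
    (x y : ℕ → Ω → ℝ)
    (hxm : ∀ j, Measurable (x j)) (hym : ∀ k, Measurable (y k))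
    (ρ : ℕ → ℝ) (hρ : ∀ j, 0 < ρ j)
    (hXY : ∫⁻ ω, ∑' (j : ℕ) (k : ℕ),
        ENNReal.ofReal ((ρ j)⁻¹ * (ρ k)⁻¹ * (x j ω) ^ 2 * (y k ω) ^ 2) ∂P < ⊤)
    (hX : ∫⁻ ω, ∑' (j : ℕ), ENNReal.ofReal ((ρ j)⁻¹ * (x j ω) ^ 2) ∂P < ⊤)
    (hY : ∫⁻ ω, ∑' (k : ℕ), ENNReal.ofReal ((ρ k)⁻¹ * (y k ω) ^ 2) ∂P < ⊤) :
    ∑' (j : ℕ) (k : ℕ),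
        ENNReal.ofReal ((ρ j)⁻¹ * (ρ k)⁻¹ *
          ((∫ ω, x j ω * y k ω ∂P) - (∫ ω, x j ω ∂P) * (∫ ω, y k ω ∂P)) ^ 2) < ⊤ := by
  have hw : ∀ j, 0 ≤ (ρ j)⁻¹ := fun j => inv_nonneg.2 (hρ j).le
  have hEXY : ∑' (p : ℕ × ℕ), ENNReal.ofReal
      ((ρ p.1)⁻¹ * (ρ p.2)⁻¹ * (∫ ω, x p.1 ω * y p.2 ω ∂P) ^ 2) < ⊤ := by
    refine (tsum_ofReal_mul_sq_integral_le_lintegral_tsum (ι := ℕ × ℕ)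
      (f := fun p ω => x p.1 ω * y p.2 ω)
      (fun p => ((hxm p.1).mul (hym p.2)).aemeasurable)
      fun p => mul_nonneg (hw p.1) (hw p.2)).trans_lt ?_
    simpa only [ENNReal.tsum_prod', mul_pow, mul_assoc] using hXY
  rw [ENNReal.tsum_prod'] at hEXY
  have hEX := (tsum_ofReal_mul_sq_integral_le_lintegral_tsum
    (fun j => (hxm j).aemeasurable) hw).trans_lt hX
  have hEY := (tsum_ofReal_mul_sq_integral_le_lintegral_tsum
    (fun k => (hym k).aemeasurable) hw).trans_lt hY
  calc _ ≤ ∑' (j : ℕ) (k : ℕ),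
        (2 * ENNReal.ofReal ((ρ j)⁻¹ * (ρ k)⁻¹ * (∫ ω, x j ω * y k ω ∂P) ^ 2) +
          2 * (ENNReal.ofReal ((ρ j)⁻¹ * (∫ ω, x j ω ∂P) ^ 2) *
            ENNReal.ofReal ((ρ k)⁻¹ * (∫ ω, y k ω ∂P) ^ 2))) :=
        ENNReal.tsum_le_tsum fun j => ENNReal.tsum_le_tsum fun k =>
          ofReal_mul_mul_sq_sub_mul_le (hw j) (hw k) _ _ _
    _ = 2 * ∑' (j : ℕ) (k : ℕ), ENNReal.ofReal
          ((ρ j)⁻¹ * (ρ k)⁻¹ * (∫ ω, x j ω * y k ω ∂P) ^ 2) +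
        2 * ((∑' j, ENNReal.ofReal ((ρ j)⁻¹ * (∫ ω, x j ω ∂P) ^ 2)) *
          ∑' k, ENNReal.ofReal ((ρ k)⁻¹ * (∫ ω, y k ω ∂P) ^ 2)) := by
        simp only [ENNReal.tsum_add, ENNReal.tsum_mul_left, ENNReal.tsum_mul_right]
    _ < ⊤ := by finiteness

/-- Theorem 1 (cross-covariance part), via Wahba's criterion: if
`E‖X ⊗ Y‖²_{H(K⊗K)} = ∫ ∑_{j,k} ρ_j⁻¹ ρ_k⁻¹ x_j² y_k² dP < ∞`,
`E‖X‖²_{H(K)} < ∞` and `E‖Y‖²_{H(K)} < ∞`, then the coefficient array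
`Cov(x_j, y_k) = E[x_j y_k] − E[x_j] E[y_k]` of the cross-covariance function
satisfies `∑_{j,k} ρ_j⁻¹ ρ_k⁻¹ Cov(x_j, y_k)² < ∞`, i.e. `C_{XY} ∈ H(K⊗K)`. -/
theorem crossCovariance_mem_tensor_RKHS
    {Ω : Type*} [MeasurableSpace Ω] (P : Measure Ω) [IsProbabilityMeasure P]
    (x y : ℕ → Ω → ℝ)
    (hxm : ∀ j, Measurable (x j)) (hym : ∀ k, Measurable (y k))
    (hxi : ∀ j, Integrable (x j) P) (hyi : ∀ k, Integrable (y k) P)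
    (hxyi : ∀ j k, Integrable (fun ω => x j ω * y k ω) P)
    (ρ : ℕ → ℝ) (hρ : ∀ j, 0 < ρ j)
    (hXY : ∫⁻ ω, ∑' (j : ℕ) (k : ℕ),
        ENNReal.ofReal ((ρ j)⁻¹ * (ρ k)⁻¹ * (x j ω) ^ 2 * (y k ω) ^ 2) ∂P < ⊤)
    (hX : ∫⁻ ω, ∑' (j : ℕ), ENNReal.ofReal ((ρ j)⁻¹ * (x j ω) ^ 2) ∂P < ⊤)
    (hY : ∫⁻ ω, ∑' (k : ℕ), ENNReal.ofReal ((ρ k)⁻¹ * (y k ω) ^ 2) ∂P < ⊤) :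
    ∑' (j : ℕ) (k : ℕ),
        ENNReal.ofReal ((ρ j)⁻¹ * (ρ k)⁻¹ *
          ((∫ ω, x j ω * y k ω ∂P) - (∫ ω, x j ω ∂P) * (∫ ω, y k ω ∂P)) ^ 2) < ⊤ :=
  crossCovariance_mem_tensor_RKHS_general P x y hxm hym ρ hρ hXY hX hY
end

section
/- Let ρ : ℕ → ℝ with 0 < ρ_k ≤ R for all k and some R < ∞, and let c : ℕ × ℕ → ℝ satisfy S := ∑_{j,k} ρ_j⁻¹ ρ_k⁻¹ c_{jk}² < ∞. Then ∑_{j,j'} ρ_j⁻¹ ρ_{j'}⁻¹ (∑_k c_{jk} c_{j'k})² ≤ R² S², where for each j, j' the inner series ∑_k c_{jk} c_{j'k} converges absolutely. -/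
open ENNReal

private lemma tsum_abs_mul_sq_le (f g : ℕ → ℝ)
    (hf : Summable fun k => f k ^ 2) (hg : Summable fun k => g k ^ 2) :
    Summable (fun k => |f k * g k|) ∧
      (∑' k, |f k * g k|) ^ 2 ≤ (∑' k, f k ^ 2) * (∑' k, g k ^ 2) := by
  have hsum : Summable (fun k => |f k * g k|) := by
    apply Summable.of_nonneg_of_le (fun k => abs_nonneg _)
      (fun k => ?_) ((hf.add hg).div_const 2)
    rw [abs_mul]
    calc |f k| * |g k| ≤ (|f k| ^ 2 + |g k| ^ 2) / 2 := by nlinarith [sq_nonneg (|f k| - |g k|)]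
    _ = (f k ^ 2 + g k ^ 2) / 2 := by rw [sq_abs, sq_abs]
  refine ⟨hsum, ?_⟩
  have hF : 0 ≤ ∑' k, f k ^ 2 := tsum_nonneg fun k => sq_nonneg _
  have hG : 0 ≤ ∑' k, g k ^ 2 := tsum_nonneg fun k => sq_nonneg _
  rw [← Real.le_sqrt (tsum_nonneg fun k => abs_nonneg _) (mul_nonneg hF hG)]
  apply Summable.tsum_le_of_sum_le hsum
  intro s
  rw [Real.le_sqrt (Finset.sum_nonneg fun k _ => abs_nonneg _) (mul_nonneg hF hG)]
  calc (∑ k ∈ s, |f k * g k|) ^ 2 = (∑ k ∈ s, |f k| * |g k|) ^ 2 := by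
        simp [abs_mul]
    _ ≤ (∑ k ∈ s, |f k| ^ 2) * (∑ k ∈ s, |g k| ^ 2) :=
        Finset.sum_mul_sq_le_sq_mul_sq _ _ _
    _ ≤ (∑' k, f k ^ 2) * (∑' k, g k ^ 2) := by
        apply mul_le_mul _ _ (Finset.sum_nonneg fun k _ => sq_nonneg _) hF
        · simpa [sq_abs] using Summable.sum_le_tsum s (fun k _ => sq_nonneg (f k)) hf
        · simpa [sq_abs] using Summable.sum_le_tsum s (fun k _ => sq_nonneg (g k)) hg

/-- Operator-kernel part of Theorem 1, via Wahba's criterion: if the coefficient array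
`c` of `C_{XY}` satisfies `S = ∑_{j,k} ρ_j⁻¹ ρ_k⁻¹ c_{jk}² < ∞` and `0 < ρ_k ≤ R`, then
the coefficient array `a_{jj'} = ∑_k c_{jk} c_{j'k}` of `A_{XY}` (with each inner series
converging absolutely) satisfies `∑_{j,j'} ρ_j⁻¹ρ_{j'}⁻¹ a_{jj'}² ≤ R² S²`. -/
theorem A_kernel_mem_tensor_RKHS
    (ρ : ℕ → ℝ) (R : ℝ) (hρ : ∀ k, 0 < ρ k) (hρR : ∀ k, ρ k ≤ R)
    (c : ℕ × ℕ → ℝ)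
    (hS : Summable (fun p : ℕ × ℕ => (ρ p.1)⁻¹ * (ρ p.2)⁻¹ * (c p) ^ 2)) :
    (∀ j j' : ℕ, Summable (fun k : ℕ => |c (j, k) * c (j', k)|))
      ∧ ∑' (j : ℕ) (j' : ℕ),
          ENNReal.ofReal ((ρ j)⁻¹ * (ρ j')⁻¹ * (∑' k : ℕ, c (j, k) * c (j', k)) ^ 2)
        ≤ ENNReal.ofReal (R ^ 2 *
            (∑' p : ℕ × ℕ, (ρ p.1)⁻¹ * (ρ p.2)⁻¹ * (c p) ^ 2) ^ 2) := by
  have hR : 0 < R := (hρ 0).trans_le (hρR 0)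
  set S := ∑' p : ℕ × ℕ, (ρ p.1)⁻¹ * (ρ p.2)⁻¹ * (c p) ^ 2 with hSdef
  have hSnn : 0 ≤ S := tsum_nonneg fun p =>
    mul_nonneg (mul_nonneg (inv_nonneg.2 (hρ _).le) (inv_nonneg.2 (hρ _).le)) (sq_nonneg _)
  have hnn : ∀ j k : ℕ, 0 ≤ (ρ j)⁻¹ * (ρ k)⁻¹ * (c (j, k)) ^ 2 := fun j k =>
    mul_nonneg (mul_nonneg (inv_nonneg.2 (hρ _).le) (inv_nonneg.2 (hρ _).le)) (sq_nonneg _)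
  -- Summability of squares along each row
  have hsq : ∀ j, Summable fun k => c (j, k) ^ 2 := by
    intro j
    have h1 : Summable fun k => (ρ j)⁻¹ * (ρ k)⁻¹ * (c (j, k)) ^ 2 := hS.prod_factor j
    apply Summable.of_nonneg_of_le (fun k => sq_nonneg _) (fun k => ?_)
      (h1.mul_left (ρ j * R))
    have hj := (hρ j).ne'
    have hk := (hρ k).ne'
    have key : (ρ j * R) * ((ρ j)⁻¹ * (ρ k)⁻¹ * (c (j, k)) ^ 2)
        = (R * (ρ k)⁻¹) * c (j, k) ^ 2 := by field_simp
    rw [key]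
    have h1k : (1:ℝ) ≤ R * (ρ k)⁻¹ := by
      rw [← div_eq_mul_inv]; exact (one_le_div (hρ k)).mpr (hρR k)
    nlinarith [sq_nonneg (c (j, k))]
  have hcs := fun j j' => tsum_abs_mul_sq_le (fun k => c (j, k)) (fun k => c (j', k))
      (hsq j) (hsq j')
  refine ⟨fun j j' => (hcs j j').1, ?_⟩
  -- row sums
  set H : ℕ → ℝ := fun j => ∑' k, (ρ j)⁻¹ * (ρ k)⁻¹ * (c (j, k)) ^ 2 with hHdef
  have hHnn : ∀ j, 0 ≤ H j := fun j => tsum_nonneg fun k => hnn j k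
  have hP_le : ∀ j, (ρ j)⁻¹ * ∑' k, c (j, k) ^ 2 ≤ R * H j := by
    intro j
    rw [← tsum_mul_left, hHdef, ← tsum_mul_left]
    apply Summable.tsum_le_tsum _ ((hsq j).mul_left _) ((hS.prod_factor j).mul_left _)
    intro k
    have hj := (hρ j).ne'
    have hk := (hρ k).ne'
    have : (ρ j)⁻¹ * c (j, k) ^ 2 = ρ k * ((ρ j)⁻¹ * (ρ k)⁻¹ * (c (j, k)) ^ 2) := by
      field_simp
    rw [this]
    exact mul_le_mul_of_nonneg_right (hρR k) (hnn j k)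
  have hPnn : ∀ j, 0 ≤ (ρ j)⁻¹ * ∑' k, c (j, k) ^ 2 := fun j =>
    mul_nonneg (inv_nonneg.2 (hρ j).le) (tsum_nonneg fun k => sq_nonneg _)
  -- termwise bound
  have hterm : ∀ j j', (ρ j)⁻¹ * (ρ j')⁻¹ * (∑' k, c (j, k) * c (j', k)) ^ 2
      ≤ (R * H j) * (R * H j') := by
    intro j j'
    have hsum' : Summable fun k => ‖c (j, k) * c (j', k)‖ := by
      simpa only [Real.norm_eq_abs] using (hcs j j').1
    have habs : |∑' k, c (j, k) * c (j', k)| ≤ ∑' k, |c (j, k) * c (j', k)| := by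
      simpa only [Real.norm_eq_abs] using norm_tsum_le_tsum_norm hsum'
    have h1 : (∑' k, c (j, k) * c (j', k)) ^ 2 ≤ (∑' k, |c (j, k) * c (j', k)|) ^ 2 :=
      sq_le_sq' (abs_le.1 habs).1 (abs_le.1 habs).2
    calc (ρ j)⁻¹ * (ρ j')⁻¹ * (∑' k, c (j, k) * c (j', k)) ^ 2
        ≤ (ρ j)⁻¹ * (ρ j')⁻¹ * ((∑' k, c (j, k) ^ 2) * (∑' k, c (j', k) ^ 2)) := by
          apply mul_le_mul_of_nonneg_left (h1.trans (hcs j j').2)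
            (mul_nonneg (inv_nonneg.2 (hρ j).le) (inv_nonneg.2 (hρ j').le))
      _ = ((ρ j)⁻¹ * ∑' k, c (j, k) ^ 2) * ((ρ j')⁻¹ * ∑' k, c (j', k) ^ 2) := by ring
      _ ≤ (R * H j) * (R * H j') :=
          mul_le_mul (hP_le j) (hP_le j') (hPnn j') (mul_nonneg hR.le (hHnn j))
  -- sum of H equals S
  have hHsum : Summable H := hS.prod
  have hHS : ∑' j, H j = S := (Summable.tsum_prod' hS fun j => hS.prod_factor j).symm
  -- ENNReal computation
  have hT : ∑' j, ENNReal.ofReal (R * H j) = ENNReal.ofReal (R * S) := by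
    rw [← ENNReal.ofReal_tsum_of_nonneg (fun j => mul_nonneg hR.le (hHnn j))
      (hHsum.mul_left R), tsum_mul_left, hHS]
  calc ∑' (j : ℕ) (j' : ℕ),
          ENNReal.ofReal ((ρ j)⁻¹ * (ρ j')⁻¹ * (∑' k : ℕ, c (j, k) * c (j', k)) ^ 2)
      ≤ ∑' (j : ℕ) (j' : ℕ), ENNReal.ofReal ((R * H j) * (R * H j')) :=
        ENNReal.tsum_le_tsum fun j => ENNReal.tsum_le_tsum fun j' =>
          ENNReal.ofReal_le_ofReal (hterm j j')
    _ = ∑' (j : ℕ), (ENNReal.ofReal (R * H j) * ∑' (j' : ℕ), ENNReal.ofReal (R * H j')) := by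
        congr 1; funext j
        rw [← ENNReal.tsum_mul_left]
        congr 1; funext j'
        rw [ENNReal.ofReal_mul (mul_nonneg hR.le (hHnn j))]
    _ = (∑' (j : ℕ), ENNReal.ofReal (R * H j)) * ∑' (j' : ℕ), ENNReal.ofReal (R * H j') :=
        ENNReal.tsum_mul_right
    _ = ENNReal.ofReal (R * S) * ENNReal.ofReal (R * S) := by rw [hT]
    _ = ENNReal.ofReal (R ^ 2 * S ^ 2) := by
        rw [← ENNReal.ofReal_mul (mul_nonneg hR.le hSnn)]
        ring_nf
end

section
/- Let (Ω, P) be a probability space, x, y : ℕ → Ω → ℝ sequences of measurable functions with each product x_j y_k integrable, and ρ : ℕ → ℝ with ρ_j > 0. Assume A := ∫_Ω ∑_j ρ_j⁻¹ x_j² dP < ∞ and B := ∫_Ω ∑_k y_k² dP < ∞. For j, j' ∈ ℕ define h_{jj'} = ∑_k E[x_j y_k] E[x_{j'} y_k] (the series converges absolutely). Then ∑_{j,j'} ρ_j⁻¹ ρ_{j'}⁻¹ h_{jj'}² ≤ A² B². -/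
/-!
Cauchy–Schwarz in `L²(P)` gives `E[x_j y_k]² ≤ E[x_j²] E[y_k²]`, so summing over `k`,
`∑_k E[x_j y_k]² ≤ E[x_j²] B`. Cauchy–Schwarz in `ℓ²` then bounds
`h_{jj'}² ≤ E[x_j²] E[x_{j'}²] B²`, and weighting by `ρ_j⁻¹ ρ_{j'}⁻¹` and summing over `j, j'`
gives `A² B²`. Both Cauchy–Schwarz inequalities are used in `ℝ≥0∞` form (with `‖·‖ₑ`), where
they hold with no integrability or summability side conditions.
-/

open MeasureTheory ENNReal

theorem ENNReal.lintegral_mul_sq_le {α : Type*} [MeasurableSpace α] {μ : Measure α}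
    {f g : α → ℝ≥0∞} (hf : AEMeasurable f μ) (hg : AEMeasurable g μ) :
    (∫⁻ a, f a * g a ∂μ) ^ 2 ≤ (∫⁻ a, f a ^ 2 ∂μ) * ∫⁻ a, g a ^ 2 ∂μ := by
  have h := ENNReal.lintegral_mul_le_Lp_mul_Lq μ Real.HolderConjugate.two_two hf hg
  simp only [Pi.mul_apply, ENNReal.rpow_two] at h
  calc (∫⁻ a, f a * g a ∂μ) ^ 2
      ≤ ((∫⁻ a, f a ^ 2 ∂μ) ^ (1 / 2 : ℝ) * (∫⁻ a, g a ^ 2 ∂μ) ^ (1 / 2 : ℝ)) ^ 2 := by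
        gcongr
    _ = (∫⁻ a, f a ^ 2 ∂μ) * ∫⁻ a, g a ^ 2 ∂μ := by
      rw [mul_pow, ← ENNReal.rpow_two, ← ENNReal.rpow_two, ← ENNReal.rpow_mul,
        ← ENNReal.rpow_mul]
      norm_num

theorem ENNReal.tsum_mul_sq_le {ι : Type*} (f g : ι → ℝ≥0∞) :
    (∑' i, f i * g i) ^ 2 ≤ (∑' i, f i ^ 2) * ∑' i, g i ^ 2 := by
  let _ : MeasurableSpace ι := ⊤
  simpa only [lintegral_count] using
    lintegral_mul_sq_le (μ := Measure.count) (f := f) (g := g) .of_discrete .of_discrete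

theorem Real.ofReal_sq_eq_enorm_sq (r : ℝ) : ENNReal.ofReal (r ^ 2) = ‖r‖ₑ ^ 2 := by
  rw [Real.enorm_eq_ofReal_abs, ← ENNReal.ofReal_pow (abs_nonneg r), sq_abs]

section Sequences

variable {ι : Type*} (u v : ι → ℝ)

theorem tsum_enorm_mul_sq_le :
    (∑' i, ‖u i * v i‖ₑ) ^ 2 ≤ (∑' i, ‖u i‖ₑ ^ 2) * ∑' i, ‖v i‖ₑ ^ 2 := by
  simpa only [enorm_mul] using ENNReal.tsum_mul_sq_le (‖u ·‖ₑ) (‖v ·‖ₑ)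

theorem enorm_tsum_mul_sq_le :
    ‖∑' i, u i * v i‖ₑ ^ 2 ≤ (∑' i, ‖u i‖ₑ ^ 2) * ∑' i, ‖v i‖ₑ ^ 2 :=
  (pow_le_pow_left' enorm_tsum_le_tsum_enorm 2).trans (tsum_enorm_mul_sq_le u v)

variable {u v}

theorem summable_abs_mul_of_tsum_enorm_sq_ne_top (hu : ∑' i, ‖u i‖ₑ ^ 2 ≠ ⊤)
    (hv : ∑' i, ‖v i‖ₑ ^ 2 ≠ ⊤) : Summable fun i => |u i * v i| := by
  refine .of_enorm ?_
  simp_rw [Real.enorm_abs]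
  refine (pow_ne_top_iff (n := 2)).1 ?_ |>.resolve_right two_ne_zero
  exact ((tsum_enorm_mul_sq_le u v).trans_lt (mul_lt_top hu.lt_top hv.lt_top)).ne

end Sequences

section Integrals

variable {α : Type*} [MeasurableSpace α] {μ : Measure α}

theorem enorm_integral_mul_sq_le {f g : α → ℝ} (hf : AEMeasurable f μ) (hg : AEMeasurable g μ) :
    ‖∫ a, f a * g a ∂μ‖ₑ ^ 2 ≤ (∫⁻ a, ‖f a‖ₑ ^ 2 ∂μ) * ∫⁻ a, ‖g a‖ₑ ^ 2 ∂μ :=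
  calc ‖∫ a, f a * g a ∂μ‖ₑ ^ 2 ≤ (∫⁻ a, ‖f a‖ₑ * ‖g a‖ₑ ∂μ) ^ 2 := by
        simp_rw [← enorm_mul]
        gcongr
        exact enorm_integral_le_lintegral_enorm _
    _ ≤ _ := ENNReal.lintegral_mul_sq_le hf.enorm hg.enorm

theorem tsum_enorm_integral_mul_sq_le {ι : Type*} {f : α → ℝ} {g : ι → α → ℝ}
    (hf : AEMeasurable f μ) (hg : ∀ i, AEMeasurable (g i) μ) :
    ∑' i, ‖∫ a, f a * g i a ∂μ‖ₑ ^ 2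
      ≤ (∫⁻ a, ‖f a‖ₑ ^ 2 ∂μ) * ∑' i, ∫⁻ a, ‖g i a‖ₑ ^ 2 ∂μ := by
  rw [← ENNReal.tsum_mul_left]
  exact ENNReal.tsum_le_tsum fun i => enorm_integral_mul_sq_le hf (hg i)

theorem lintegral_tsum_ofReal_mul_sq {f : ℕ → α → ℝ} (hf : ∀ j, AEMeasurable (f j) μ)
    {w : ℕ → ℝ} (hw : ∀ j, 0 ≤ w j) :
    ∫⁻ a, ∑' j, ENNReal.ofReal (w j * f j a ^ 2) ∂μ
      = ∑' j, ENNReal.ofReal (w j) * ∫⁻ a, ‖f j a‖ₑ ^ 2 ∂μ := by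
  simp_rw [ENNReal.ofReal_mul (hw _), Real.ofReal_sq_eq_enorm_sq]
  rw [lintegral_tsum fun j => ((hf j).enorm.pow_const 2).const_mul _]
  simp_rw [lintegral_const_mul' _ _ ofReal_ne_top]

end Integrals

theorem tsum_tsum_ofReal_mul_mul_sq_le {ι : Type*} {w : ι → ℝ} (hw : ∀ i, 0 ≤ w i)
    {h : ι → ι → ℝ} {a : ι → ℝ≥0∞} {C : ℝ≥0∞} (hh : ∀ i j, ‖h i j‖ₑ ^ 2 ≤ a i * a j * C) :
    ∑' i, ∑' j, ENNReal.ofReal (w i * w j * h i j ^ 2)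
      ≤ (∑' i, ENNReal.ofReal (w i) * a i) ^ 2 * C :=
  calc ∑' i, ∑' j, ENNReal.ofReal (w i * w j * h i j ^ 2)
      ≤ ∑' i, ∑' j, ENNReal.ofReal (w i) * a i * (ENNReal.ofReal (w j) * a j) * C := by
        gcongr with i j
        rw [ENNReal.ofReal_mul (mul_nonneg (hw i) (hw j)), ENNReal.ofReal_mul (hw i),
          Real.ofReal_sq_eq_enorm_sq]
        calc ENNReal.ofReal (w i) * ENNReal.ofReal (w j) * ‖h i j‖ₑ ^ 2
            ≤ ENNReal.ofReal (w i) * ENNReal.ofReal (w j) * (a i * a j * C) := by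
              gcongr
              exact hh i j
          _ = _ := by ring
    _ = (∑' i, ENNReal.ofReal (w i) * a i) ^ 2 * C := by
        simp only [ENNReal.tsum_mul_right, ENNReal.tsum_mul_left]
        ring

theorem term_I_bound_general
    {Ω : Type*} [MeasurableSpace Ω] (P : Measure Ω)
    (x y : ℕ → Ω → ℝ)
    (hxm : ∀ j, Measurable (x j)) (hym : ∀ k, Measurable (y k))
    (ρ : ℕ → ℝ) (hρ : ∀ j, 0 < ρ j)
    (A B : ℝ≥0∞)
    (hA : A = ∫⁻ ω, ∑' (j : ℕ), ENNReal.ofReal ((ρ j)⁻¹ * (x j ω) ^ 2) ∂P)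
    (hAfin : A ≠ ⊤)
    (hB : B = ∫⁻ ω, ∑' (k : ℕ), ENNReal.ofReal ((y k ω) ^ 2) ∂P)
    (hBfin : B ≠ ⊤) :
    (∀ j j' : ℕ, Summable (fun k : ℕ =>
        |(∫ ω, x j ω * y k ω ∂P) * (∫ ω, x j' ω * y k ω ∂P)|))
      ∧ ∑' (j : ℕ) (j' : ℕ),
          ENNReal.ofReal ((ρ j)⁻¹ * (ρ j')⁻¹ *
            (∑' k : ℕ, (∫ ω, x j ω * y k ω ∂P) * (∫ ω, x j' ω * y k ω ∂P)) ^ 2)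
        ≤ A ^ 2 * B ^ 2 := by
  set c : ℕ → ℕ → ℝ := fun j k => ∫ ω, x j ω * y k ω ∂P
  set a : ℕ → ℝ≥0∞ := fun j => ∫⁻ ω, ‖x j ω‖ₑ ^ 2 ∂P
  have hρ_inv_nonneg : ∀ j, 0 ≤ (ρ j)⁻¹ := fun j => (inv_pos.2 (hρ j)).le
  have hA' : A = ∑' j, ENNReal.ofReal (ρ j)⁻¹ * a j :=
    hA.trans (lintegral_tsum_ofReal_mul_sq (fun j => (hxm j).aemeasurable) hρ_inv_nonneg)
  have hB' : B = ∑' k, ∫⁻ ω, ‖y k ω‖ₑ ^ 2 ∂P := by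
    simp_rw [hB, Real.ofReal_sq_eq_enorm_sq]
    exact lintegral_tsum fun k => ((hym k).enorm.pow_const 2).aemeasurable
  have hrow : ∀ j, ∑' k, ‖c j k‖ₑ ^ 2 ≤ a j * B := fun j =>
    hB' ▸ tsum_enorm_integral_mul_sq_le (hxm j).aemeasurable fun k => (hym k).aemeasurable
  have ha_ne_top : ∀ j, a j ≠ ⊤ := fun j ha => hAfin <| by
    rw [eq_top_iff, ← ENNReal.mul_top (ofReal_pos.2 (inv_pos.2 (hρ j))).ne', ← ha, hA']
    exact ENNReal.le_tsum j
  have hrow_ne_top : ∀ j, ∑' k, ‖c j k‖ₑ ^ 2 ≠ ⊤ := fun j =>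
    ((hrow j).trans_lt (mul_lt_top (ha_ne_top j).lt_top hBfin.lt_top)).ne
  refine ⟨fun j j' => summable_abs_mul_of_tsum_enorm_sq_ne_top (hrow_ne_top j) (hrow_ne_top j'),
    ?_⟩
  refine hA' ▸ tsum_tsum_ofReal_mul_mul_sq_le hρ_inv_nonneg fun j j' => ?_
  calc ‖∑' k, c j k * c j' k‖ₑ ^ 2 ≤ (a j * B) * (a j' * B) :=
        (enorm_tsum_mul_sq_le _ _).trans (mul_le_mul' (hrow j) (hrow j'))
    _ = a j * a j' * B ^ 2 := by ring

/-- The bound for term I in the proof of Theorem 1: with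
`A = E‖X‖²_{H(K)} = ∫ ∑_j ρ_j⁻¹ x_j² dP < ∞` and `B = E‖Y‖²_{L₂} = ∫ ∑_k y_k² dP < ∞`,
the coefficients `h_{jj'} = ∑_k E[x_j y_k] E[x_{j'} y_k]` (the series converging
absolutely) satisfy `∑_{j,j'} ρ_j⁻¹ ρ_{j'}⁻¹ h_{jj'}² ≤ A² B²`. -/
theorem term_I_bound
    {Ω : Type*} [MeasurableSpace Ω] (P : Measure Ω) [IsProbabilityMeasure P]
    (x y : ℕ → Ω → ℝ)
    (hxm : ∀ j, Measurable (x j)) (hym : ∀ k, Measurable (y k))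
    (hxyi : ∀ j k, Integrable (fun ω => x j ω * y k ω) P)
    (ρ : ℕ → ℝ) (hρ : ∀ j, 0 < ρ j)
    (A B : ℝ≥0∞)
    (hA : A = ∫⁻ ω, ∑' (j : ℕ), ENNReal.ofReal ((ρ j)⁻¹ * (x j ω) ^ 2) ∂P)
    (hAfin : A ≠ ⊤)
    (hB : B = ∫⁻ ω, ∑' (k : ℕ), ENNReal.ofReal ((y k ω) ^ 2) ∂P)
    (hBfin : B ≠ ⊤) :
    (∀ j j' : ℕ, Summable (fun k : ℕ =>
        |(∫ ω, x j ω * y k ω ∂P) * (∫ ω, x j' ω * y k ω ∂P)|))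
      ∧ ∑' (j : ℕ) (j' : ℕ),
          ENNReal.ofReal ((ρ j)⁻¹ * (ρ j')⁻¹ *
            (∑' k : ℕ, (∫ ω, x j ω * y k ω ∂P) * (∫ ω, x j' ω * y k ω ∂P)) ^ 2)
        ≤ A ^ 2 * B ^ 2 :=
  term_I_bound_general P x y hxm hym ρ hρ A B hA hAfin hB hBfin
end

section
/- Let (T, μ) be a σ-finite measure space and let C, D ∈ L²(T × T, μ ⊗ μ). Define A_C(s,t) = ∫_T C(s,u) C(t,u) dμ(u) and A_D(s,t) = ∫_T D(s,u) D(t,u) dμ(u). Then A_C and A_D belong to L²(T × T, μ ⊗ μ) and ‖A_D − A_C‖_{L²(T×T)} ≤ ‖D − C‖²_{L²(T×T)} + 2 ‖C‖_{L²(T×T)} ‖D − C‖_{L²(T×T)}. -/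
/-!
Cauchy–Schwarz in the inner variable followed by Tonelli shows that the kernel
`K(f, g)(s, t) = ∫ f(s,u) g(t,u) dμ(u)` has `L²` norm at most `‖f‖₂ ‖g‖₂`. It is bilinear
in `(f, g)`, so `A_D − A_C = K(D − C, D) + K(C, D − C)`, and `‖D‖₂ ≤ ‖C‖₂ + ‖D − C‖₂`
finishes.
-/

open MeasureTheory ENNReal

section
variable {α : Type*} [MeasurableSpace α] {μ : Measure α}

lemma eLpNorm_two_sq_eq_lintegral {ε : Type*} [ENorm ε] (f : α → ε) :
    eLpNorm f 2 μ ^ 2 = ∫⁻ x, ‖f x‖ₑ ^ 2 ∂μ := by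
  rw [eLpNorm_eq_lintegral_rpow_enorm_toReal two_ne_zero ofNat_ne_top, ← rpow_natCast,
    ← rpow_mul]
  norm_num

lemma enorm_integral_mul_le {φ ψ : α → ℝ} (hφ : AEStronglyMeasurable φ μ)
    (hψ : AEStronglyMeasurable ψ μ) :
    ‖∫ x, φ x * ψ x ∂μ‖ₑ ≤ eLpNorm φ 2 μ * eLpNorm ψ 2 μ :=
  calc ‖∫ x, φ x * ψ x ∂μ‖ₑ ≤ eLpNorm (fun x => φ x * ψ x) 1 μ :=
        (enorm_integral_le_lintegral_enorm _).trans_eq eLpNorm_one_eq_lintegral_enorm.symm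
    _ ≤ eLpNorm φ 2 μ * eLpNorm ψ 2 μ := by
        simpa using eLpNorm_le_eLpNorm_mul_eLpNorm'_of_norm (p := 2) (q := 2) hφ hψ (· * ·) 1
          (.of_forall fun x => by simp [norm_mul])

end

section
variable {S T U : Type*} [MeasurableSpace S] [MeasurableSpace T] [MeasurableSpace U]
  {μ : Measure S} {ν : Measure T} {ρ : Measure U}

lemma eLpNorm_two_prod_sq [SFinite ρ] {ε : Type*} [TopologicalSpace ε] [ContinuousENorm ε]
    {f : S × U → ε} (hf : AEStronglyMeasurable f (μ.prod ρ)) :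
    eLpNorm f 2 (μ.prod ρ) ^ 2 = ∫⁻ s, eLpNorm (fun u => f (s, u)) 2 ρ ^ 2 ∂μ := by
  simp_rw [eLpNorm_two_sq_eq_lintegral]
  exact lintegral_prod _ (hf.enorm.pow_const 2)

lemma measurable_eLpNorm_two_sq_prodMk_left [SFinite ρ] {f : S × U → ℝ} (hf : Measurable f) :
    Measurable fun s => eLpNorm (fun u => f (s, u)) 2 ρ ^ 2 := by
  simp_rw [eLpNorm_two_sq_eq_lintegral]
  exact (hf.enorm.pow_const 2).lintegral_prod_right'

lemma ae_memLp_two_prodMk_left [SFinite μ] [SFinite ρ] {f : S × U → ℝ}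
    (hf : MemLp f 2 (μ.prod ρ)) :
    ∀ᵐ s ∂μ, MemLp (fun u => f (s, u)) 2 ρ := by
  filter_upwards [hf.1.prodMk_left, hf.integrable_sq.prod_right_ae] with s hs hs2
  exact (memLp_two_iff_integrable_sq hs).2 hs2

/-- The kernel of `K_f ∘ K_g*`, where `K_k` is the integral operator with kernel `k`;
the paper's `A_C` is `kernelCompAdjoint μ C C`. -/
noncomputable def kernelCompAdjoint (ρ : Measure U) (f : S × U → ℝ) (g : T × U → ℝ) :
    S × T → ℝ :=
  fun p => ∫ u, f (p.1, u) * g (p.2, u) ∂ρ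

lemma kernelCompAdjoint_congr_ae [SFinite ν] [SFinite ρ] {f f' : S × U → ℝ}
    {g g' : T × U → ℝ} (hf : f =ᵐ[μ.prod ρ] f') (hg : g =ᵐ[ν.prod ρ] g') :
    kernelCompAdjoint ρ f g =ᵐ[μ.prod ν] kernelCompAdjoint ρ f' g' := by
  filter_upwards [Measure.quasiMeasurePreserving_fst.ae (Measure.ae_ae_of_ae_prod hf),
    Measure.quasiMeasurePreserving_snd.ae (Measure.ae_ae_of_ae_prod hg)] with p hfp hgp
  refine integral_congr_ae ?_
  filter_upwards [hfp, hgp] with u hfu hgu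
  rw [hfu, hgu]

lemma stronglyMeasurable_kernelCompAdjoint [SFinite ρ] {f : S × U → ℝ} {g : T × U → ℝ}
    (hf : Measurable f) (hg : Measurable g) :
    StronglyMeasurable (kernelCompAdjoint ρ f g) :=
  (show Measurable fun q : (S × T) × U => f (q.1.1, q.2) * g (q.1.2, q.2) by fun_prop)
    |>.stronglyMeasurable.integral_prod_right'

lemma aestronglyMeasurable_kernelCompAdjoint [SFinite ν] [SFinite ρ] {f : S × U → ℝ}
    {g : T × U → ℝ} (hf : AEStronglyMeasurable f (μ.prod ρ))
    (hg : AEStronglyMeasurable g (ν.prod ρ)) :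
    AEStronglyMeasurable (kernelCompAdjoint ρ f g) (μ.prod ν) :=
  ⟨_, stronglyMeasurable_kernelCompAdjoint hf.stronglyMeasurable_mk.measurable
    hg.stronglyMeasurable_mk.measurable, kernelCompAdjoint_congr_ae hf.ae_eq_mk hg.ae_eq_mk⟩

lemma eLpNorm_kernelCompAdjoint_le_of_measurable [SFinite ν] [SFinite ρ] {f : S × U → ℝ}
    {g : T × U → ℝ} (hf : Measurable f) (hg : Measurable g) :
    eLpNorm (kernelCompAdjoint ρ f g) 2 (μ.prod ν)
      ≤ eLpNorm f 2 (μ.prod ρ) * eLpNorm g 2 (ν.prod ρ) := by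
  rw [← ENNReal.pow_le_pow_left_iff two_ne_zero, mul_pow,
    eLpNorm_two_prod_sq hf.aestronglyMeasurable, eLpNorm_two_prod_sq hg.aestronglyMeasurable,
    ← lintegral_prod_mul (measurable_eLpNorm_two_sq_prodMk_left hf).aemeasurable
      (measurable_eLpNorm_two_sq_prodMk_left hg).aemeasurable,
    eLpNorm_two_sq_eq_lintegral]
  refine lintegral_mono fun p => ?_
  rw [← mul_pow]
  gcongr
  exact enorm_integral_mul_le (hf.comp measurable_prodMk_left).aestronglyMeasurable
    (hg.comp measurable_prodMk_left).aestronglyMeasurable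

lemma eLpNorm_kernelCompAdjoint_le [SFinite ν] [SFinite ρ] {f : S × U → ℝ}
    {g : T × U → ℝ} (hf : AEStronglyMeasurable f (μ.prod ρ))
    (hg : AEStronglyMeasurable g (ν.prod ρ)) :
    eLpNorm (kernelCompAdjoint ρ f g) 2 (μ.prod ν)
      ≤ eLpNorm f 2 (μ.prod ρ) * eLpNorm g 2 (ν.prod ρ) := by
  rw [eLpNorm_congr_ae (kernelCompAdjoint_congr_ae hf.ae_eq_mk hg.ae_eq_mk),
    eLpNorm_congr_ae hf.ae_eq_mk, eLpNorm_congr_ae hg.ae_eq_mk]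
  exact eLpNorm_kernelCompAdjoint_le_of_measurable hf.stronglyMeasurable_mk.measurable
    hg.stronglyMeasurable_mk.measurable

lemma memLp_kernelCompAdjoint [SFinite ν] [SFinite ρ] {f : S × U → ℝ} {g : T × U → ℝ}
    (hf : MemLp f 2 (μ.prod ρ)) (hg : MemLp g 2 (ν.prod ρ)) :
    MemLp (kernelCompAdjoint ρ f g) 2 (μ.prod ν) :=
  ⟨aestronglyMeasurable_kernelCompAdjoint hf.1 hg.1,
    (eLpNorm_kernelCompAdjoint_le hf.1 hg.1).trans_lt (mul_lt_top hf.2 hg.2)⟩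

lemma kernelCompAdjoint_sub_kernelCompAdjoint_ae_eq [SFinite μ] [SFinite ν] [SFinite ρ]
    {f f' : S × U → ℝ} {g g' : T × U → ℝ} (hf : MemLp f 2 (μ.prod ρ))
    (hf' : MemLp f' 2 (μ.prod ρ)) (hg : MemLp g 2 (ν.prod ρ)) (hg' : MemLp g' 2 (ν.prod ρ)) :
    kernelCompAdjoint ρ f g - kernelCompAdjoint ρ f' g' =ᵐ[μ.prod ν]
      kernelCompAdjoint ρ (f - f') g + kernelCompAdjoint ρ f' (g - g') := by
  filter_upwards [Measure.quasiMeasurePreserving_fst.ae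
      ((ae_memLp_two_prodMk_left hf).and (ae_memLp_two_prodMk_left hf')),
    Measure.quasiMeasurePreserving_snd.ae
      ((ae_memLp_two_prodMk_left hg).and (ae_memLp_two_prodMk_left hg'))]
    with p ⟨hfp, hf'p⟩ ⟨hgp, hg'p⟩
  have hmul {φ ψ : U → ℝ} (hφ : MemLp φ 2 ρ) (hψ : MemLp ψ 2 ρ) :
      Integrable (fun u => φ u * ψ u) ρ :=
    hφ.integrable_mul hψ
  simp only [kernelCompAdjoint, Pi.add_apply, Pi.sub_apply, sub_mul, mul_sub]
  rw [integral_sub (hmul hfp hgp) (hmul hf'p hgp), integral_sub (hmul hf'p hgp) (hmul hf'p hg'p)]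
  ring

lemma eLpNorm_kernelCompAdjoint_sub_le [SFinite μ] [SFinite ν] [SFinite ρ]
    {f f' : S × U → ℝ} {g g' : T × U → ℝ} (hf : MemLp f 2 (μ.prod ρ))
    (hf' : MemLp f' 2 (μ.prod ρ)) (hg : MemLp g 2 (ν.prod ρ)) (hg' : MemLp g' 2 (ν.prod ρ)) :
    eLpNorm (kernelCompAdjoint ρ f g - kernelCompAdjoint ρ f' g') 2 (μ.prod ν)
      ≤ eLpNorm (f - f') 2 (μ.prod ρ) * eLpNorm g 2 (ν.prod ρ)
        + eLpNorm f' 2 (μ.prod ρ) * eLpNorm (g - g') 2 (ν.prod ρ) := by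
  rw [eLpNorm_congr_ae (kernelCompAdjoint_sub_kernelCompAdjoint_ae_eq hf hf' hg hg')]
  have hff' := (hf.sub hf').1
  have hgg' := (hg.sub hg').1
  exact (eLpNorm_add_le (aestronglyMeasurable_kernelCompAdjoint hff' hg.1)
    (aestronglyMeasurable_kernelCompAdjoint hf'.1 hgg') one_le_two).trans
      (add_le_add (eLpNorm_kernelCompAdjoint_le hff' hg.1)
        (eLpNorm_kernelCompAdjoint_le hf'.1 hgg'))

end

theorem A_kernel_perturbation_general
    {T : Type*} [MeasurableSpace T] (μ : Measure T) [SigmaFinite μ]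
    (C D : T × T → ℝ)
    (hC : MemLp C 2 (μ.prod μ)) (hD : MemLp D 2 (μ.prod μ))
    (AC AD : T × T → ℝ)
    (hAC : AC = fun p => ∫ u, C (p.1, u) * C (p.2, u) ∂μ)
    (hAD : AD = fun p => ∫ u, D (p.1, u) * D (p.2, u) ∂μ) :
    MemLp AC 2 (μ.prod μ) ∧ MemLp AD 2 (μ.prod μ)
      ∧ eLpNorm (AD - AC) 2 (μ.prod μ)
          ≤ eLpNorm (D - C) 2 (μ.prod μ) ^ 2
            + 2 * eLpNorm C 2 (μ.prod μ) * eLpNorm (D - C) 2 (μ.prod μ) := by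
  obtain rfl : AC = kernelCompAdjoint μ C C := hAC
  obtain rfl : AD = kernelCompAdjoint μ D D := hAD
  refine ⟨memLp_kernelCompAdjoint hC hC, memLp_kernelCompAdjoint hD hD, ?_⟩
  have hD_le :
      eLpNorm D 2 (μ.prod μ) ≤ eLpNorm C 2 (μ.prod μ) + eLpNorm (D - C) 2 (μ.prod μ) := by
    simpa using eLpNorm_add_le hC.1 (hD.sub hC).1 one_le_two
  calc _ ≤ eLpNorm (D - C) 2 (μ.prod μ) * eLpNorm D 2 (μ.prod μ)
          + eLpNorm C 2 (μ.prod μ) * eLpNorm (D - C) 2 (μ.prod μ) :=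
        eLpNorm_kernelCompAdjoint_sub_le hD hC hD hC
    _ ≤ eLpNorm (D - C) 2 (μ.prod μ)
            * (eLpNorm C 2 (μ.prod μ) + eLpNorm (D - C) 2 (μ.prod μ))
          + eLpNorm C 2 (μ.prod μ) * eLpNorm (D - C) 2 (μ.prod μ) := by
        gcongr
    _ = _ := by ring

/-- The inequality from the proof of Corollary 1: for `C, D ∈ L²(T × T)`, the kernels
`A_C(s,t) = ∫ C(s,u) C(t,u) dμ(u)` and `A_D(s,t) = ∫ D(s,u) D(t,u) dμ(u)` belong to
`L²(T × T)` and `‖A_D − A_C‖_{L²} ≤ ‖D − C‖²_{L²} + 2 ‖C‖_{L²} ‖D − C‖_{L²}`. -/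
theorem A_kernel_perturbation
    {T : Type*} [MeasurableSpace T] (μ : Measure T) [SigmaFinite μ]
    (C D : T × T → ℝ)
    (hCm : Measurable C) (hDm : Measurable D)
    (hC : MemLp C 2 (μ.prod μ)) (hD : MemLp D 2 (μ.prod μ))
    (AC AD : T × T → ℝ)
    (hAC : AC = fun p => ∫ u, C (p.1, u) * C (p.2, u) ∂μ)
    (hAD : AD = fun p => ∫ u, D (p.1, u) * D (p.2, u) ∂μ) :
    MemLp AC 2 (μ.prod μ) ∧ MemLp AD 2 (μ.prod μ)
      ∧ eLpNorm (AD - AC) 2 (μ.prod μ)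
          ≤ eLpNorm (D - C) 2 (μ.prod μ) ^ 2
            + 2 * eLpNorm C 2 (μ.prod μ) * eLpNorm (D - C) 2 (μ.prod μ) :=
  A_kernel_perturbation_general μ C D hC hD AC AD hAC hAD
end

section
/- Let (T, μ) be a measure space, N₁, N₂ positive integers, g₁ : Fin N₁ → T → ℝ and g₂ : Fin N₂ → T → ℝ families of square-integrable functions, P and Q the Gram matrices P_{ij} = ∫ g₁ᵢ g₁ⱼ dμ and Q_{ij} = ∫ g₂ᵢ g₂ⱼ dμ, with P positive definite, and A an N₁ × N₂ real matrix. Suppose P^{1/2} A Q Aᵀ P^{1/2} = ∑_k σ_k² w_k w_kᵀ where (w_k) is an orthonormal basis of ℝ^{N₁} and σ_k² ≥ 0 (a spectral decomposition). Define ψ_k(s) = (P^{-1/2} w_k)ᵀ g₁(s) and Ĉ(s,u) = g₁(s)ᵀ A g₂(u), where g₁(s) ∈ ℝ^{N₁} and g₂(u) ∈ ℝ^{N₂} denote the vectors of values. Then for all s, t ∈ T: ∑_k σ_k² ψ_k(s) ψ_k(t) = ∫_T Ĉ(s,u) Ĉ(t,u) dμ(u). -/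
open MeasureTheory Matrix

/-! With `v_k = S⁻¹ w_k` and `S` symmetric, the decomposition says `A Q Aᵀ = ∑ σ_k² v_k v_kᵀ`,
so the left side is the bilinear form `g₁(s)ᵀ (A Q Aᵀ) g₁(t)`. Since `Ĉ(s, ·) = (Aᵀ g₁(s))ᵀ g₂`
and `Q` is the Gram matrix of `g₂`, integrating `Ĉ(s, u) Ĉ(t, u)` gives the same form. -/

namespace Matrix

variable {R n ι : Type*} [CommRing R] [Fintype n] [Fintype ι]

theorem dotProduct_sum_smul_vecMulVec_mulVec (c : ι → R) (v : ι → n → R) (x y : n → R) :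
    x ⬝ᵥ (∑ k, c k • vecMulVec (v k) (v k)) *ᵥ y = ∑ k, c k * (v k ⬝ᵥ x) * (v k ⬝ᵥ y) := by
  simp only [sum_mulVec, smul_mulVec, vecMulVec_mulVec, op_smul_eq_smul, dotProduct_sum,
    dotProduct_smul, smul_eq_mul]
  exact Finset.sum_congr rfl fun k _ => by rw [dotProduct_comm x]; ring

variable [DecidableEq n]

theorem inv_mul_vecMulVec_mul_inv_of_isSymm {S : Matrix n n R} (hS : S.IsSymm) (w : n → R) :
    S⁻¹ * vecMulVec w w * S⁻¹ = vecMulVec (S⁻¹ *ᵥ w) (S⁻¹ *ᵥ w) := by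
  rw [mul_vecMulVec, vecMulVec_mul, ← mulVec_transpose, hS.inv.eq]

theorem eq_sum_vecMulVec_of_mul_mul_eq {S M : Matrix n n R} (hS : S.IsSymm)
    (hdet : IsUnit S.det) (c : ι → R) (w : ι → n → R)
    (h : S * M * S = ∑ k, c k • vecMulVec (w k) (w k)) :
    M = ∑ k, c k • vecMulVec (S⁻¹ *ᵥ w k) (S⁻¹ *ᵥ w k) := by
  calc M = S⁻¹ * (S * M * S) * S⁻¹ := by
        rw [← Matrix.mul_assoc S⁻¹ (S * M) S, mul_nonsing_inv_cancel_right _ _ hdet,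
          nonsing_inv_mul_cancel_left _ _ hdet]
    _ = _ := by
        simp only [h, Matrix.mul_sum, Matrix.sum_mul, Matrix.mul_smul, Matrix.smul_mul,
          inv_mul_vecMulVec_mul_inv_of_isSymm hS]

end Matrix

theorem integral_dotProduct_mul_dotProduct {T ι : Type*} [MeasurableSpace T] {μ : Measure T}
    [Fintype ι] {g : ι → T → ℝ} (hg : ∀ i, MemLp (g i) 2 μ) (a b : ι → ℝ) :
    ∫ u, (a ⬝ᵥ fun i => g i u) * (b ⬝ᵥ fun i => g i u) ∂μ
      = a ⬝ᵥ (of fun i j => ∫ u, g i u * g j u ∂μ) *ᵥ b := by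
  have hint : ∀ i j, Integrable (fun u => a i * b j * (g i u * g j u)) μ := fun i j =>
    ((hg i).integrable_mul (hg j)).const_mul _
  have hexpand : ∀ u, (a ⬝ᵥ fun i => g i u) * (b ⬝ᵥ fun i => g i u)
      = ∑ i, ∑ j, a i * b j * (g i u * g j u) := fun u => by
    simp only [dotProduct, Finset.sum_mul_sum]
    exact Finset.sum_congr rfl fun i _ => Finset.sum_congr rfl fun j _ => by ring
  simp only [hexpand]
  rw [integral_finsetSum _ fun i _ => integrable_finsetSum _ fun j _ => hint i j]
  simp only [integral_finsetSum _ fun j _ => hint _ j, integral_const_mul, dotProduct, mulVec,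
    of_apply, Finset.mul_sum]
  exact Finset.sum_congr rfl fun i _ => Finset.sum_congr rfl fun j _ => by ring

theorem singular_decomposition_identity_general
    {T : Type*} [MeasurableSpace T] (μ : Measure T)
    (N₁ N₂ : ℕ)
    (g₁ : Fin N₁ → T → ℝ) (g₂ : Fin N₂ → T → ℝ)
    (hg₂ : ∀ j, MemLp (g₂ j) 2 μ)
    (Q : Matrix (Fin N₂) (Fin N₂) ℝ)
    (hQ : Q = Matrix.of fun i j => ∫ u, g₂ i u * g₂ j u ∂μ)
    (S : Matrix (Fin N₁) (Fin N₁) ℝ) (hSpd : S.PosDef)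
    (A : Matrix (Fin N₁) (Fin N₂) ℝ)
    (w : Fin N₁ → Fin N₁ → ℝ)
    (σsq : Fin N₁ → ℝ)
    (hdecomp : S * (A * Q * Aᵀ) * S = ∑ k, σsq k • Matrix.vecMulVec (w k) (w k))
    (ψ : Fin N₁ → T → ℝ)
    (hψ : ∀ k, ψ k = fun s => ∑ i, (S⁻¹ *ᵥ w k) i * g₁ i s)
    (Chat : T → T → ℝ)
    (hChat : Chat = fun s u => ∑ i, ∑ j, g₁ i s * A i j * g₂ j u) :
    ∀ s t : T, ∑ k, σsq k * ψ k s * ψ k t = ∫ u, Chat s u * Chat t u ∂μ := by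
  intro s t
  have hS : S.IsSymm := isHermitian_iff_isSymm.mp hSpd.isHermitian
  have hM := eq_sum_vecMulVec_of_mul_mul_eq hS ((isUnit_iff_isUnit_det S).mp hSpd.isUnit)
    σsq w hdecomp
  have hChat' : ∀ x u, Chat x u = ((fun i => g₁ i x) ᵥ* A) ⬝ᵥ fun j => g₂ j u := by
    intro x u
    simp only [hChat, dotProduct, vecMul, Finset.sum_mul]
    exact Finset.sum_comm
  calc ∑ k, σsq k * ψ k s * ψ k t
      = (fun i => g₁ i s) ⬝ᵥ (A * Q * Aᵀ) *ᵥ fun i => g₁ i t := by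
        rw [hM, dotProduct_sum_smul_vecMulVec_mulVec]
        simp only [hψ, dotProduct]
    _ = ((fun i => g₁ i s) ᵥ* A) ⬝ᵥ Q *ᵥ ((fun i => g₁ i t) ᵥ* A) := by
        rw [← mulVec_mulVec, ← mulVec_mulVec, mulVec_transpose, dotProduct_mulVec]
    _ = ∫ u, Chat s u * Chat t u ∂μ := by
        simp only [hChat', integral_dotProduct_mul_dotProduct hg₂, hQ]

/-- The identity from the proof of Lemma 2: if `Ĉ(s,u) = g₁(s)ᵀ A g₂(u)`,
`P = ∫ g₁ g₁ᵀ` and `Q = ∫ g₂ g₂ᵀ` are the Gram matrices, `S = P^{1/2}` is the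
positive-definite square root of `P`, and `S A Q Aᵀ S = ∑ k σ_k² w_k w_kᵀ` is a spectral
decomposition with `(w_k)` an orthonormal basis of `ℝ^{N₁}` and `σ_k² ≥ 0`, then for the
functions `ψ_k(s) = (S⁻¹ w_k)ᵀ g₁(s)` one has
`∑ k σ_k² ψ_k(s) ψ_k(t) = ∫ Ĉ(s,u) Ĉ(t,u) dμ(u)` for all `s, t`. -/
theorem singular_decomposition_identity
    {T : Type*} [MeasurableSpace T] (μ : Measure T)
    (N₁ N₂ : ℕ) (hN₁ : 0 < N₁) (hN₂ : 0 < N₂)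
    (g₁ : Fin N₁ → T → ℝ) (g₂ : Fin N₂ → T → ℝ)
    (hg₁ : ∀ i, MemLp (g₁ i) 2 μ) (hg₂ : ∀ j, MemLp (g₂ j) 2 μ)
    (P : Matrix (Fin N₁) (Fin N₁) ℝ)
    (hP : P = Matrix.of fun i j => ∫ u, g₁ i u * g₁ j u ∂μ)
    (Q : Matrix (Fin N₂) (Fin N₂) ℝ)
    (hQ : Q = Matrix.of fun i j => ∫ u, g₂ i u * g₂ j u ∂μ)
    (hPpd : P.PosDef)
    (S : Matrix (Fin N₁) (Fin N₁) ℝ) (hSpd : S.PosDef) (hSS : S * S = P)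
    (A : Matrix (Fin N₁) (Fin N₂) ℝ)
    (w : Fin N₁ → Fin N₁ → ℝ)
    (hw : ∀ k₁ k₂, ∑ i, w k₁ i * w k₂ i = if k₁ = k₂ then (1 : ℝ) else 0)
    (σsq : Fin N₁ → ℝ) (hσsq : ∀ k, 0 ≤ σsq k)
    (hdecomp : S * (A * Q * Aᵀ) * S = ∑ k, σsq k • Matrix.vecMulVec (w k) (w k))
    (ψ : Fin N₁ → T → ℝ)
    (hψ : ∀ k, ψ k = fun s => ∑ i, (S⁻¹ *ᵥ w k) i * g₁ i s)
    (Chat : T → T → ℝ)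
    (hChat : Chat = fun s u => ∑ i, ∑ j, g₁ i s * A i j * g₂ j u) :
    ∀ s t : T, ∑ k, σsq k * ψ k s * ψ k t = ∫ u, Chat s u * Chat t u ∂μ :=
  singular_decomposition_identity_general μ N₁ N₂ g₁ g₂ hg₂ Q hQ S hSpd A w σsq hdecomp ψ hψ Chat
    hChat
end
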